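/- Suppose there are constants c_V, c₁, c_W, c₂ ∈ ℝ and R ≥ 0 such that ⟨∇V(x)−∇V(y), x−y⟩ ≥ c_V|x−y|² − c₁|x−y|·1_{[|x−y|≤R]} and ⟨∇_x W(x,z)−∇_x W(y,z), x−y⟩ ≥ c_W|x−y|² − c₂|x−y|·1_{[|x−y|≤R]} for all x, y, z ∈ ℝ^d, and that c_V + c_W > 0. Then c_{Lip,m} ≤ (1/(c_V + c_W)) · exp((c₁ + c₂)R/4). -/

import Mathlib

open MeasureTheory Real Filter Finset
open scoped ENNReal BigOperators RealInnerProductSpace Classical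

noncomputable section

/-- `ℝ^d` as a Euclidean space. -/
abbrev Euc (d : ℕ) := EuclideanSpace ℝ (Fin d)

/-- The Gibbs (Boltzmann) probability measure `Z⁻¹ e^{-H} dx` on a measure space. -/
def gibbs {X : Type*} [MeasureSpace X] (H : X → ℝ) : Measure X :=
  (∫⁻ x, ENNReal.ofReal (Real.exp (-H x)))⁻¹ •
    (volume.withDensity fun x => ENNReal.ofReal (Real.exp (-H x)))

/-- Variance of `f` under `μ`. -/
def varOf {X : Type*} [MeasurableSpace X] (μ : Measure X) (f : X → ℝ) : ℝ :=
  (∫ x, f x ^ 2 ∂μ) - (∫ x, f x ∂μ) ^ 2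

/-- Entropy `Ent_μ(g) = ∫ g log (g / ∫ g dμ) dμ`. -/
def entOf {X : Type*} [MeasurableSpace X] (μ : Measure X) (g : X → ℝ) : ℝ :=
  ∫ x, g x * Real.log (g x / ∫ y, g y ∂μ) ∂μ

/-- Bounded `C¹` function. -/
def IsBddC1 {X : Type*} [NormedAddCommGroup X] [NormedSpace ℝ X] (f : X → ℝ) : Prop :=
  ContDiff ℝ 1 f ∧ ∃ M, ∀ x, |f x| ≤ M

/-- Poincaré inequality with constant `ρ` for a measure on `ℝ^d`. -/
def PoincareOne {d : ℕ} (μ : Measure (Euc d)) (ρ : ℝ) : Prop :=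
  ∀ f : Euc d → ℝ, IsBddC1 f → ρ * varOf μ f ≤ ∫ x, ‖gradient f x‖ ^ 2 ∂μ

/-- Log-Sobolev inequality with constant `ρ` for a measure on `ℝ^d`. -/
def LogSobOne {d : ℕ} (μ : Measure (Euc d)) (ρ : ℝ) : Prop :=
  ∀ f : Euc d → ℝ, IsBddC1 f →
    ρ * entOf μ (fun x => f x ^ 2) ≤ 2 * ∫ x, ‖gradient f x‖ ^ 2 ∂μ

/-- Partial gradient `∇_i f` of a function of `N` particles. -/
def igrad {d N : ℕ} (f : (Fin N → Euc d) → ℝ) (i : Fin N) (x : Fin N → Euc d) : Euc d :=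
  gradient (fun xi => f (Function.update x i xi)) (x i)

/-- Poincaré inequality with constant `ρ` on the `N`-particle space `(ℝ^d)^N`,
with `|∇f|² = Σ_i |∇_i f|²`. -/
def PoincareN {d N : ℕ} (μ : Measure (Fin N → Euc d)) (ρ : ℝ) : Prop :=
  ∀ f : (Fin N → Euc d) → ℝ, IsBddC1 f →
    ρ * varOf μ f ≤ ∫ x, ∑ i, ‖igrad f i x‖ ^ 2 ∂μ

/-- Log-Sobolev inequality with constant `ρ` on the `N`-particle space `(ℝ^d)^N`. -/
def LogSobN {d N : ℕ} (μ : Measure (Fin N → Euc d)) (ρ : ℝ) : Prop :=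
  ∀ f : (Fin N → Euc d) → ℝ, IsBddC1 f →
    ρ * entOf μ (fun x => f x ^ 2) ≤ 2 * ∫ x, ∑ i, ‖igrad f i x‖ ^ 2 ∂μ

/-- The dissipativity rate `b₀(r)` of the drift of one particle. -/
def b0 {d : ℕ} (V : Euc d → ℝ) (W : Euc d → Euc d → ℝ) (r : ℝ) : ℝ :=
  sSup { b : ℝ | ∃ x y z : Euc d, ‖x - y‖ = r ∧
    b = -⟪‖x - y‖⁻¹ • (x - y), (gradient V x - gradient V y) +
          (gradient (fun x' => W x' z) x - gradient (fun y' => W y' z) y)⟫ }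

/-- The Lipschitzian spectral gap constant
`c_{Lip,m} = (1/4)∫₀^∞ exp((1/4)∫₀^s b₀(u) du) s ds`. -/
def cLip {d : ℕ} (V : Euc d → ℝ) (W : Euc d → Euc d → ℝ) : ℝ :=
  (1 / 4) * ∫ s in Set.Ioi (0 : ℝ),
    Real.exp ((1 / 4) * ∫ u in Set.Ioc (0 : ℝ) s, b0 V W u) * s

/-- Finiteness of `c_{Lip,m}` (integrability of the defining integrand). -/
def cLipFinite {d : ℕ} (V : Euc d → ℝ) (W : Euc d → Euc d → ℝ) : Prop :=
  IntegrableOn (fun s : ℝ =>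
    Real.exp ((1 / 4) * ∫ u in Set.Ioc (0 : ℝ) s, b0 V W u) * s) (Set.Ioi (0 : ℝ))

/-- The mean-field Hamiltonian `H_N = Σ V(x_i) + (N-1)⁻¹ Σ_{i<j} W(x_i,x_j)`. -/
def HamN {d : ℕ} (V : Euc d → ℝ) (W : Euc d → Euc d → ℝ) (N : ℕ)
    (x : Fin N → Euc d) : ℝ :=
  ∑ i, V (x i) + ((N : ℝ) - 1)⁻¹ *
    ∑ i, ∑ j ∈ univ.filter (fun j => i < j), W (x i) (x j)

/-- The mean-field Gibbs measure `μ^{(N)}`. -/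
def muN {d : ℕ} (V : Euc d → ℝ) (W : Euc d → Euc d → ℝ) (N : ℕ) :
    Measure (Fin N → Euc d) :=
  gibbs (HamN V W N)

/-- The conditional Hamiltonian of particle `i` given the others. -/
def condH {d : ℕ} (V : Euc d → ℝ) (W : Euc d → Euc d → ℝ) (N : ℕ) (i : Fin N)
    (x : Fin N → Euc d) (xi : Euc d) : ℝ :=
  V xi + ((N : ℝ) - 1)⁻¹ * ∑ j ∈ univ.filter (fun j => j ≠ i), W xi (x j)

/-- The one-particle conditional distribution `μ_i(dx_i | x^î)`. -/
def muCond {d : ℕ} (V : Euc d → ℝ) (W : Euc d → Euc d → ℝ) (N : ℕ) (i : Fin N)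
    (x : Fin N → Euc d) : Measure (Euc d) :=
  gibbs (condH V W N i x)

/-- The mixed Hessian `∇²_{x,y} W (x,y)` as a continuous linear map. -/
def mixedHess {d : ℕ} (W : Euc d → Euc d → ℝ) (x y : Euc d) : Euc d →L[ℝ] Euc d :=
  fderiv ℝ (fun y' => gradient (fun x' => W x' y') x) y

/-- Relative entropy `H(ν|μ) ∈ (-∞, +∞]`, `+∞` unless `ν ≪ μ` with `log dν/dμ ∈ L¹(ν)`. -/
def relEnt {X : Type*} [MeasurableSpace X] (ν μ : Measure X) : EReal :=
  if ν ≪ μ ∧ Integrable (fun x => Real.log ((ν.rnDeriv μ x).toReal)) ν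
  then ((∫ x, Real.log ((ν.rnDeriv μ x).toReal) ∂ν : ℝ) : EReal)
  else ⊤

/-- The measure `α = C⁻¹ e^{-V} dx`. -/
def alphaM {d : ℕ} (V : Euc d → ℝ) : Measure (Euc d) := gibbs V

/-- The interaction part `(1/2)∬ W dν dν` of the free energy, `+∞` if not integrable. -/
def pairInt {d : ℕ} (W : Euc d → Euc d → ℝ) (ν : Measure (Euc d)) : EReal :=
  if Integrable (fun p : Euc d × Euc d => W p.1 p.2) (ν.prod ν)
  then (((1 : ℝ) / 2) * ∫ p, W p.1 p.2 ∂(ν.prod ν) : ℝ)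
  else ⊤

/-- The mean-field free energy `E_f(ν) = H(ν|α) + (1/2)∬ W dν dν`. -/
def Ef {d : ℕ} (V : Euc d → ℝ) (W : Euc d → Euc d → ℝ) (ν : Measure (Euc d)) : EReal :=
  relEnt ν (alphaM V) + pairInt W ν

/-- The infimum of the free energy over all probability measures. -/
def EfInf {d : ℕ} (V : Euc d → ℝ) (W : Euc d → Euc d → ℝ) : EReal :=
  ⨅ ν : ProbabilityMeasure (Euc d), Ef V W (ν : Measure (Euc d))

/-- The mean-field entropy `H_W(ν) = E_f(ν) - inf E_f`. -/
def HW {d : ℕ} (V : Euc d → ℝ) (W : Euc d → Euc d → ℝ) (ν : Measure (Euc d)) : EReal :=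
  Ef V W ν - EfInf V W

/-- `g` is the (distributional) gradient of `f`. -/
def IsWeakGrad {d : ℕ} (f : Euc d → ℝ) (g : Euc d → Euc d) : Prop :=
  LocallyIntegrable f volume ∧ LocallyIntegrable g volume ∧
  ∀ φ : Euc d → ℝ, ContDiff ℝ (⊤ : ℕ∞) φ → HasCompactSupport φ →
    ∫ x, f x • gradient φ x = -∫ x, φ x • g x

/-- The mean-field Fisher–Donsker–Varadhan information
`I_W(ν) = (1/4)∫ |∇f/f + ∇V + ∇_x W ⊛ ν|² dν` for `ν = f dx` with finite second moment
and `∇f ∈ L¹_loc`, and `+∞` otherwise. -/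
def IW {d : ℕ} (V : Euc d → ℝ) (W : Euc d → Euc d → ℝ) (ν : Measure (Euc d)) : ℝ≥0∞ :=
  sInf { r : ℝ≥0∞ | ∃ f : Euc d → ℝ, ∃ g : Euc d → Euc d,
    (∀ x, 0 ≤ f x) ∧ ν = volume.withDensity (fun x => ENNReal.ofReal (f x)) ∧
    (∫⁻ x, (‖x‖₊ : ℝ≥0∞) ^ 2 ∂ν) < ⊤ ∧ IsWeakGrad f g ∧
    r = (1 / 4 : ℝ≥0∞) * ∫⁻ x, (‖(f x)⁻¹ • g x + gradient V x +
        ∫ y, gradient (fun x' => W x' y) x ∂ν‖₊ : ℝ≥0∞) ^ 2 ∂ν }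

/-- `cpl` is a coupling of `μ` and `ν`. -/
def IsCoupling {X : Type*} [MeasurableSpace X] (cpl : Measure (X × X)) (μ ν : Measure X) :
    Prop :=
  cpl.map Prod.fst = μ ∧ cpl.map Prod.snd = ν

/-- The squared `L²`-Wasserstein distance `W₂²(μ,ν)`. -/
def W2sq {d : ℕ} (μ ν : Measure (Euc d)) : ℝ≥0∞ :=
  ⨅ (cpl : Measure (Euc d × Euc d)) (_ : IsCoupling cpl μ ν),
    ∫⁻ p, (‖p.1 - p.2‖₊ : ℝ≥0∞) ^ 2 ∂cpl

/-- The `L¹`-Wasserstein distance `W₁(μ,ν)`. -/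
def W1dist {d : ℕ} (μ ν : Measure (Euc d)) : ℝ≥0∞ :=
  ⨅ (cpl : Measure (Euc d × Euc d)) (_ : IsCoupling cpl μ ν),
    ∫⁻ p, (‖p.1 - p.2‖₊ : ℝ≥0∞) ∂cpl

/-- The (optimal) log-Sobolev constant of `μ^{(N)}`. -/
def rhoLSN {d : ℕ} (V : Euc d → ℝ) (W : Euc d → Euc d → ℝ) (N : ℕ) : ℝ :=
  sSup { ρ : ℝ | 0 ≤ ρ ∧ LogSobN (muN V W N) ρ }

/-- `ρ_{LS} = limsup_{N→∞} ρ_{LS}(μ^{(N)})`. -/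
def rhoLSlim {d : ℕ} (V : Euc d → ℝ) (W : Euc d → Euc d → ℝ) : ℝ :=
  limsup (fun N => rhoLSN V W N) atTop

/-- Assumption (H1): `V` is `C²`, `Hess V` bounded below, and `x·∇V(x) ≥ c₁|x|² - c₂`. -/
def H1cond {d : ℕ} (V : Euc d → ℝ) : Prop :=
  ContDiff ℝ 2 V ∧
  (∃ c : ℝ, ∀ x v : Euc d, c * ‖v‖ ^ 2 ≤ ⟪fderiv ℝ (gradient V) x v, v⟫) ∧
  (∃ c₁ c₂ : ℝ, 0 < c₁ ∧ 0 < c₂ ∧ ∀ x : Euc d, c₁ * ‖x‖ ^ 2 - c₂ ≤ ⟪x, gradient V x⟫)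

/-- Assumption (H2): `W` is `C²` with bounded Hessian and
`∬ exp(-[V(x)+V(y)+λ W(x,y)]) dx dy < ∞` for all `λ > 0`. -/
def H2cond {d : ℕ} (V : Euc d → ℝ) (W : Euc d → Euc d → ℝ) : Prop :=
  ContDiff ℝ 2 (fun p : Euc d × Euc d => W p.1 p.2) ∧
  (∃ K : ℝ, ∀ p : Euc d × Euc d,
    ‖iteratedFDeriv ℝ 2 (fun q : Euc d × Euc d => W q.1 q.2) p‖ ≤ K) ∧
  ∀ lam : ℝ, 0 < lam → Integrable (fun p : Euc d × Euc d =>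
    Real.exp (-(V p.1 + V p.2 + lam * W p.1 p.2)))

/-- The Laplacian on `ℝ^d` (trace of the Hessian). -/
def lap {d : ℕ} (φ : Euc d → ℝ) (x : Euc d) : ℝ :=
  ∑ i, ⟪fderiv ℝ (gradient φ) x (EuclideanSpace.single i (1 : ℝ)),
        EuclideanSpace.single i (1 : ℝ)⟫

/-- Mixed Hessian `∇²_{x_i,x_j} U` of a function on `(ℝ^d)^N`. -/
def mixedHessN {d N : ℕ} (U : (Fin N → Euc d) → ℝ) (i j : Fin N)
    (x : Fin N → Euc d) : Euc d →L[ℝ] Euc d :=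
  fderiv ℝ (fun xj => igrad U i (Function.update x j xj)) (x j)


section MyAux
open Topology

lemma gauss_int {κ : ℝ} (hκ : 0 < κ) :
    IntegrableOn (fun x : ℝ => x * exp (-(κ/8) * x^2)) (Set.Ioi 0) ∧
      ∫ x in Set.Ioi 0, x * exp (-(κ/8) * x^2) = 4/κ := by
  have hderiv : ∀ x ∈ Set.Ici (0:ℝ),
      HasDerivAt (fun x : ℝ => -(4/κ) * exp (-(κ/8) * x^2)) (x * exp (-(κ/8) * x^2)) x := by
    intro x _
    have h0 : HasDerivAt (fun x : ℝ => -(κ/8) * x^2) (-(κ/8) * (2 * x^1)) x :=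
      (hasDerivAt_pow 2 x).const_mul _
    have h1 := (h0.exp).const_mul (-(4/κ))
    convert h1 using 1
    · rfl
    · rfl
    field_simp
    ring
  have hpos : ∀ x ∈ Set.Ioi (0:ℝ), 0 ≤ x * exp (-(κ/8) * x^2) := fun x hx =>
    mul_nonneg (le_of_lt hx) (exp_pos _).le
  have htend : Tendsto (fun x : ℝ => -(4/κ) * exp (-(κ/8) * x^2)) atTop (𝓝 0) := by
    have h1 : Tendsto (fun x : ℝ => (κ/8) * x^2) atTop atTop :=
      (tendsto_pow_atTop two_ne_zero).const_mul_atTop (by positivity)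
    have h2 : Tendsto (fun x : ℝ => -(κ/8) * x^2) atTop atBot := by
      have := tendsto_neg_atTop_atBot.comp h1
      simpa [Function.comp_def, neg_mul] using this
    have h3 := (Real.tendsto_exp_atBot).comp h2
    have h4 := h3.const_mul (-(4/κ))
    simpa using h4
  refine ⟨integrableOn_Ioi_deriv_of_nonneg' hderiv hpos htend, ?_⟩
  rw [integral_Ioi_of_hasDerivAt_of_nonneg' hderiv hpos htend]
  norm_num

lemma cc_nonneg {d : ℕ} (hd : 0 < d) (G : Euc d → Euc d) (hG : Continuous G)
    {c cc R : ℝ} (hR : 0 < R)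
    (h : ∀ x y : Euc d, c * ‖x - y‖ ^ 2 - (if ‖x - y‖ ≤ R then cc * ‖x - y‖ else 0)
      ≤ ⟪G x - G y, x - y⟫) : 0 ≤ cc := by
  set e₀ : Euc d := EuclideanSpace.single (⟨0, hd⟩ : Fin d) (1:ℝ) with he₀
  have he : ‖e₀‖ = 1 := by simp [he₀]
  have key : ∀ t ∈ Set.Ioc (0:ℝ) R, c * t - ‖G (t • e₀) - G 0‖ ≤ cc := by
    rintro t ⟨ht0, htR⟩
    have hnorm : ‖t • e₀ - (0:Euc d)‖ = t := by
      simp [norm_smul, he, abs_of_pos ht0]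
    have h1 := h (t • e₀) 0
    rw [hnorm, if_pos htR] at h1
    have hCS : ⟪G (t • e₀) - G 0, t • e₀ - 0⟫ ≤ ‖G (t • e₀) - G 0‖ * t := by
      calc ⟪G (t • e₀) - G 0, t • e₀ - 0⟫ ≤ ‖G (t • e₀) - G 0‖ * ‖t • e₀ - (0:Euc d)‖ :=
            real_inner_le_norm _ _
        _ = ‖G (t • e₀) - G 0‖ * t := by rw [hnorm]
    nlinarith [h1, hCS, ht0]
  have hcont : Continuous (fun t : ℝ => c * t - ‖G (t • e₀) - G 0‖) := by
    have : Continuous (fun t : ℝ => t • e₀) := continuous_id.smul continuous_const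
    exact (continuous_const.mul continuous_id).sub (((hG.comp this).sub continuous_const).norm)
  have htend : Tendsto (fun t : ℝ => c * t - ‖G (t • e₀) - G 0‖) (𝓝[>] 0) (𝓝 0) := by
    have h1 : Tendsto (fun t : ℝ => c * t - ‖G (t • e₀) - G 0‖) (𝓝[>] (0:ℝ))
        (𝓝 (c * 0 - ‖G ((0:ℝ) • e₀) - G 0‖)) :=
      (hcont.tendsto 0).mono_left nhdsWithin_le_nhds
    simpa using h1
  exact le_of_tendsto htend (Filter.eventually_of_mem
    (Ioc_mem_nhdsGT_of_mem ⟨le_refl 0, hR⟩) key)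

def Ffun {d : ℕ} (V : Euc d → ℝ) (W : Euc d → Euc d → ℝ) (r : ℝ)
    (p : Metric.sphere (0 : Euc d) 1 × Euc d × Euc d) : ℝ :=
  -⟪(p.1 : Euc d), (gradient V (p.2.1 + r • (p.1 : Euc d)) - gradient V p.2.1) +
      (gradient (fun x' => W x' p.2.2) (p.2.1 + r • (p.1 : Euc d)) -
        gradient (fun x' => W x' p.2.2) p.2.1)⟫

def Bfun {d : ℕ} (V : Euc d → ℝ) (W : Euc d → Euc d → ℝ) (κ a : ℝ) (r : ℝ) : ℝ :=
  ⨆ p : Metric.sphere (0 : Euc d) 1 × Euc d × Euc d, min (Ffun V W r p) (-(κ * r) + |a|)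


lemma grad_cont {d : ℕ} {f : Euc d → ℝ} (hf : ContDiff ℝ 2 f) :
    Continuous (fun x => gradient f x) :=
  (InnerProductSpace.toDual ℝ (Euc d)).symm.continuous.comp
    (hf.continuous_fderiv (by norm_num))

lemma Wz_smooth {d : ℕ} {W : Euc d → Euc d → ℝ}
    (hW : ContDiff ℝ 2 (fun p : Euc d × Euc d => W p.1 p.2)) (z : Euc d) :
    ContDiff ℝ 2 (fun x' => W x' z) :=
  hW.comp (contDiff_id.prodMk contDiff_const)

lemma Ffun_cont {d : ℕ} {V : Euc d → ℝ} {W : Euc d → Euc d → ℝ}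
    (hV : ContDiff ℝ 2 V) (hW : ContDiff ℝ 2 (fun p : Euc d × Euc d => W p.1 p.2))
    (p : Metric.sphere (0 : Euc d) 1 × Euc d × Euc d) :
    Continuous (fun r => Ffun V W r p) := by
  obtain ⟨⟨e, he⟩, y, z⟩ := p
  have hline : Continuous (fun r : ℝ => y + r • e) := by continuity
  have h1 := (grad_cont hV).comp hline
  have h2 := (grad_cont (Wz_smooth hW z)).comp hline
  exact (continuous_const.inner ((h1.sub continuous_const).add
    (h2.sub continuous_const))).neg

lemma Bfun_measurable {d : ℕ} {V : Euc d → ℝ} {W : Euc d → Euc d → ℝ}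
    (hV : ContDiff ℝ 2 V) (hW : ContDiff ℝ 2 (fun p : Euc d × Euc d => W p.1 p.2))
    (κ a : ℝ) : Measurable (Bfun V W κ a) := by
  apply LowerSemicontinuous.measurable
  apply lowerSemicontinuous_ciSup
  · intro r
    exact ⟨-(κ * r) + |a|, by rintro b ⟨p, rfl⟩; exact min_le_right _ _⟩
  · intro p
    exact ((Ffun_cont hV hW p).min (by continuity)).lowerSemicontinuous

section Main
variable {d : ℕ} (V : Euc d → ℝ) (W : Euc d → Euc d → ℝ)
variable {cV c₁ cW c₂ R : ℝ}

lemma b0_set_eq {r : ℝ} (hr : 0 < r) :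
    { b : ℝ | ∃ x y z : Euc d, ‖x - y‖ = r ∧
      b = -⟪‖x - y‖⁻¹ • (x - y), (gradient V x - gradient V y) +
            (gradient (fun x' => W x' z) x - gradient (fun y' => W y' z) y)⟫ }
      = Set.range (Ffun V W r) := by
  ext b
  constructor
  · rintro ⟨x, y, z, hxy, rfl⟩
    have hne : ‖x - y‖ ≠ 0 := by rw [hxy]; exact hr.ne'
    have he : ‖(‖x - y‖⁻¹ • (x - y))‖ = 1 := by
      rw [norm_smul, norm_inv, norm_norm, inv_mul_cancel₀ hne]
    refine ⟨⟨⟨‖x - y‖⁻¹ • (x - y), by simpa using he⟩, y, z⟩, ?_⟩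
    have hx : y + r • ‖x - y‖⁻¹ • (x - y) = x := by
      rw [← hxy, smul_smul, mul_inv_cancel₀ hne, one_smul]
      abel
    simp only [Ffun, hx]
  · rintro ⟨⟨⟨e, he⟩, y, z⟩, rfl⟩
    have he1 : ‖e‖ = 1 := by simpa using he
    refine ⟨y + r • e, y, z, ?_, ?_⟩
    · simp [norm_smul, he1, abs_of_pos hr]
    · have h1 : y + r • e - y = r • e := by abel
      have h2 : ‖y + r • e - y‖ = r := by
        rw [h1]; simp [norm_smul, he1, abs_of_pos hr]
      rw [Ffun]
      congr 1
      rw [h2, h1, smul_smul, inv_mul_cancel₀ hr.ne', one_smul]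

variable
    (hdV : ∀ x y : Euc d,
      cV * ‖x - y‖ ^ 2 - (if ‖x - y‖ ≤ R then c₁ * ‖x - y‖ else 0)
        ≤ ⟪gradient V x - gradient V y, x - y⟫)
    (hdW : ∀ x y z : Euc d,
      cW * ‖x - y‖ ^ 2 - (if ‖x - y‖ ≤ R then c₂ * ‖x - y‖ else 0)
        ≤ ⟪gradient (fun x' => W x' z) x - gradient (fun y' => W y' z) y, x - y⟫)

include hdV hdW in
lemma Ffun_le {r : ℝ} (hr : 0 < r) (p : Metric.sphere (0 : Euc d) 1 × Euc d × Euc d) :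
    Ffun V W r p ≤ -((cV + cW) * r) + (if r ≤ R then c₁ + c₂ else 0) := by
  obtain ⟨⟨e, he⟩, y, z⟩ := p
  have he1 : ‖e‖ = 1 := by simpa using he
  set x := y + r • e with hxdef
  have h1 : x - y = r • e := by rw [hxdef]; abel
  have h2 : ‖x - y‖ = r := by rw [h1]; simp [norm_smul, he1, abs_of_pos hr]
  have hV' := hdV x y
  have hW' := hdW x y z
  rw [h2] at hV' hW'
  have hsum : (cV + cW) * r ^ 2 - (if r ≤ R then (c₁ + c₂) * r else 0) ≤
      ⟪(gradient V x - gradient V y) +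
        (gradient (fun x' => W x' z) x - gradient (fun y' => W y' z) y), x - y⟫ := by
    rw [inner_add_left]
    split_ifs at hV' hW' ⊢ <;> nlinarith [hV', hW']
  have hinner : ⟪(gradient V x - gradient V y) +
        (gradient (fun x' => W x' z) x - gradient (fun y' => W y' z) y), x - y⟫
      = r * ⟪(e : Euc d), (gradient V x - gradient V y) +
        (gradient (fun x' => W x' z) x - gradient (fun y' => W y' z) y)⟫ := by
    rw [h1, real_inner_smul_right, real_inner_comm]
  rw [hinner] at hsum
  have hF : Ffun V W r ⟨⟨e, he⟩, y, z⟩ = -⟪(e : Euc d), (gradient V x - gradient V y) +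
        (gradient (fun x' => W x' z) x - gradient (fun y' => W y' z) y)⟫ := rfl
  rw [hF]
  split_ifs at hsum ⊢ with hR <;> nlinarith [hsum]

include hdV hdW in
lemma Ffun_le' {r : ℝ} (hr : 0 < r) (p : Metric.sphere (0 : Euc d) 1 × Euc d × Euc d) :
    Ffun V W r p ≤ -((cV + cW) * r) + |c₁ + c₂| := by
  refine le_trans (Ffun_le V W hdV hdW hr p) (add_le_add le_rfl ?_)
  split_ifs
  · exact le_abs_self _
  · exact abs_nonneg _

include hdV hdW in
lemma bddAbove_Ffun {r : ℝ} (hr : 0 < r) : BddAbove (Set.range (Ffun V W r)) :=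
  ⟨-((cV + cW) * r) + |c₁ + c₂|, by
    rintro b ⟨p, rfl⟩; exact Ffun_le' V W hdV hdW hr p⟩

include hdV hdW in
lemma b0_eq_Bfun {r : ℝ} (hr : 0 < r) : b0 V W r = Bfun V W (cV + cW) (c₁ + c₂) r := by
  have hmin : ∀ p : Metric.sphere (0 : Euc d) 1 × Euc d × Euc d,
      min (Ffun V W r p) (-((cV + cW) * r) + |c₁ + c₂|) = Ffun V W r p := fun p =>
    min_eq_left (Ffun_le' V W hdV hdW hr p)
  rw [b0, b0_set_eq V W hr, sSup_range, Bfun]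
  simp only [hmin]

include hdV hdW in
lemma b0_le (hd : 0 < d) {r : ℝ} (hr : 0 < r) :
    b0 V W r ≤ -((cV + cW) * r) + (if r ≤ R then c₁ + c₂ else 0) := by
  haveI : Nonempty (Metric.sphere (0 : Euc d) 1) :=
    ⟨⟨EuclideanSpace.single (⟨0, hd⟩ : Fin d) (1:ℝ), by simp⟩⟩
  rw [b0, b0_set_eq V W hr]
  exact csSup_le (Set.range_nonempty _) (by rintro b ⟨p, rfl⟩; exact Ffun_le V W hdV hdW hr p)

include hdV hdW in
lemma b0_ge {r : ℝ} (hr : 0 < r) (p : Metric.sphere (0 : Euc d) 1 × Euc d × Euc d) :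
    Ffun V W r p ≤ b0 V W r := by
  rw [b0, b0_set_eq V W hr]
  exact le_csSup (bddAbove_Ffun V W hdV hdW hr) (Set.mem_range_self p)

include hdV hdW in
lemma b0_integrableOn (hd : 0 < d) (hV : ContDiff ℝ 2 V)
    (hW : ContDiff ℝ 2 (fun p : Euc d × Euc d => W p.1 p.2))
    (hκ : 0 < cV + cW) {s : ℝ} (hs : 0 < s) :
    IntegrableOn (b0 V W) (Set.Ioc 0 s) := by
  haveI hne : Nonempty (Metric.sphere (0 : Euc d) 1) :=
    ⟨⟨EuclideanSpace.single (⟨0, hd⟩ : Fin d) (1:ℝ), by simp⟩⟩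
  set p₀ : Metric.sphere (0 : Euc d) 1 × Euc d × Euc d := ⟨Classical.arbitrary _, 0, 0⟩
  obtain ⟨C₁, hC₁⟩ := (isCompact_Icc (a := (0:ℝ)) (b := s)).exists_bound_of_continuousOn
    (Ffun_cont hV hW p₀).continuousOn
  set C := max C₁ |c₁ + c₂| with hC
  have hbound : ∀ r ∈ Set.Ioc (0:ℝ) s, ‖b0 V W r‖ ≤ C := by
    rintro r ⟨hr0, hrs⟩
    have hub : b0 V W r ≤ C := by
      refine le_trans (b0_le V W hdV hdW hd hr0) (le_trans ?_ (le_max_right _ _))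
      have h1 : -((cV + cW) * r) ≤ 0 := by nlinarith
      have h2 : (if r ≤ R then c₁ + c₂ else 0) ≤ |c₁ + c₂| := by
        split_ifs
        · exact le_abs_self _
        · exact abs_nonneg _
      linarith
    have hlb : -C ≤ b0 V W r := by
      have h1 := b0_ge V W hdV hdW hr0 p₀
      have h2 := hC₁ r ⟨hr0.le, hrs⟩
      have h3 : -C₁ ≤ Ffun V W r p₀ := by
        rw [Real.norm_eq_abs] at h2
        cases abs_le.mp h2 with
        | intro hl hr => linarith
      have h4 : -C ≤ -C₁ := by
        simp only [neg_le_neg_iff, hC]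
        exact le_max_left _ _
      linarith
    rw [Real.norm_eq_abs, abs_le]
    exact ⟨hlb, hub⟩
  have haemeas : AEStronglyMeasurable (b0 V W) (volume.restrict (Set.Ioc (0:ℝ) s)) := by
    refine ((Bfun_measurable hV hW (cV + cW) (c₁ + c₂)).aestronglyMeasurable).congr ?_
    refine (ae_restrict_iff' measurableSet_Ioc).mpr (ae_of_all _ fun r hr => ?_)
    exact (b0_eq_Bfun V W hdV hdW hr.1).symm
  refine Integrable.mono' (g := fun _ => C)
    (integrableOn_const measure_Ioc_lt_top.ne) haemeas ?_
  exact (ae_restrict_iff' measurableSet_Ioc).mpr (ae_of_all _ hbound)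

include hdV hdW in
lemma b0_setIntegral_le (hd : 0 < d) (hV : ContDiff ℝ 2 V)
    (hW : ContDiff ℝ 2 (fun p : Euc d × Euc d => W p.1 p.2))
    (hκ : 0 < cV + cW) (hR : 0 ≤ R) (haR : 0 ≤ c₁ + c₂ ∨ R = 0) {s : ℝ} (hs : 0 < s) :
    ∫ r in Set.Ioc (0:ℝ) s, b0 V W r ≤ -((cV + cW) * s^2/2) + (c₁ + c₂) * R := by
  have hint1 : IntegrableOn (fun r : ℝ => (-(cV + cW)) * r) (Set.Ioc (0:ℝ) s) :=
    (continuous_const.mul continuous_id).integrableOn_Ioc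
  have hint2 : IntegrableOn ((Set.Iic R).indicator (fun _ => c₁ + c₂)) (Set.Ioc (0:ℝ) s) :=
    (integrableOn_const measure_Ioc_lt_top.ne).indicator measurableSet_Iic
  have hgint : IntegrableOn (fun r => (-(cV + cW)) * r +
      (Set.Iic R).indicator (fun _ => c₁ + c₂) r) (Set.Ioc (0:ℝ) s) := hint1.add hint2
  have hmono : ∫ r in Set.Ioc (0:ℝ) s, b0 V W r ≤
      ∫ r in Set.Ioc (0:ℝ) s, ((-(cV + cW)) * r +
        (Set.Iic R).indicator (fun _ => c₁ + c₂) r) := by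
    refine setIntegral_mono_on (b0_integrableOn V W hdV hdW hd hV hW hκ hs) hgint
      measurableSet_Ioc (fun r hr => ?_)
    refine (b0_le V W hdV hdW hd hr.1).trans_eq ?_
    simp only [Set.indicator_apply, Set.mem_Iic, neg_mul]
  have hv1 : ∫ r in Set.Ioc (0:ℝ) s, (-(cV + cW)) * r = (-(cV + cW)) * (s^2/2) := by
    rw [integral_const_mul]
    have : ∫ r in Set.Ioc (0:ℝ) s, r = s^2/2 := by
      rw [← intervalIntegral.integral_of_le hs.le, integral_id]
      ring
    rw [this]
  have hv2 : ∫ r in Set.Ioc (0:ℝ) s, (Set.Iic R).indicator (fun _ => c₁ + c₂) r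
      = (min s R) * (c₁ + c₂) := by
    rw [setIntegral_indicator measurableSet_Iic]
    have hseteq : Set.Ioc (0:ℝ) s ∩ Set.Iic R = Set.Ioc 0 (min s R) := by
      ext u
      simp only [Set.mem_inter_iff, Set.mem_Ioc, Set.mem_Iic, le_min_iff]
      tauto
    have hmin0 : (0:ℝ) ≤ min s R := le_min hs.le hR
    rw [hseteq, setIntegral_const, Real.volume_real_Ioc_of_le hmin0, sub_zero,
      smul_eq_mul]
  have hval : ∫ r in Set.Ioc (0:ℝ) s, ((-(cV + cW)) * r +
      (Set.Iic R).indicator (fun _ => c₁ + c₂) r)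
      = (-(cV + cW)) * (s^2/2) + (min s R) * (c₁ + c₂) := by
    rw [integral_add hint1 hint2, hv1, hv2]
  have hfin : (min s R) * (c₁ + c₂) ≤ (c₁ + c₂) * R := by
    rcases haR with hapos | hR0
    · have : min s R ≤ R := min_le_right _ _
      have h0 : (0:ℝ) ≤ min s R := le_min hs.le hR
      nlinarith
    · have h0 : min s R = 0 := by rw [hR0]; exact min_eq_right hs.le
      rw [h0, hR0]; simp
  rw [hval] at hmono
  nlinarith [hmono, hfin]

end Main
end MyAux

/-- Under dissipativity at infinity of `∇V` and `∇_x W` with constants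
`c_V, c₁, c_W, c₂, R` and `c_V + c_W > 0`, one has
`c_{Lip,m} ≤ (c_V + c_W)⁻¹ exp((c₁+c₂)R/4)`. -/
theorem stmt3 {d : ℕ} (V : Euc d → ℝ) (W : Euc d → Euc d → ℝ)
    (hV : ContDiff ℝ 2 V)
    (hWsmooth : ContDiff ℝ 2 (fun p : Euc d × Euc d => W p.1 p.2))
    (hWsymm : ∀ x y, W x y = W y x)
    (cV c₁ cW c₂ R : ℝ) (hR : 0 ≤ R)
    (hdV : ∀ x y : Euc d,
      cV * ‖x - y‖ ^ 2 - (if ‖x - y‖ ≤ R then c₁ * ‖x - y‖ else 0)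
        ≤ ⟪gradient V x - gradient V y, x - y⟫)
    (hdW : ∀ x y z : Euc d,
      cW * ‖x - y‖ ^ 2 - (if ‖x - y‖ ≤ R then c₂ * ‖x - y‖ else 0)
        ≤ ⟪gradient (fun x' => W x' z) x - gradient (fun y' => W y' z) y, x - y⟫)
    (hcVW : 0 < cV + cW) :
    cLip V W ≤ (cV + cW)⁻¹ * Real.exp ((c₁ + c₂) * R / 4) := by
  rcases Nat.eq_zero_or_pos d with hd0 | hd
  · subst hd0
    have hb0 : ∀ u : ℝ, 0 < u → b0 V W u = 0 := by
      intro u hu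
      rw [b0]
      convert Real.sSup_empty using 2
      rw [Set.eq_empty_iff_forall_notMem]
      rintro b ⟨x, y, z, hxy, -⟩
      have hxy' : x = y := Subsingleton.elim x y
      rw [hxy', sub_self, norm_zero] at hxy
      exact hu.ne' hxy.symm
    have hI : ∀ s : ℝ, ∫ u in Set.Ioc (0:ℝ) s, b0 V W u = 0 := by
      intro s
      rw [setIntegral_congr_fun measurableSet_Ioc (fun u hu => hb0 u hu.1)]
      simp
    have hnotint : ¬ IntegrableOn (fun s : ℝ => s) (Set.Ioi (0:ℝ)) := by
      intro h
      have h1 : IntegrableOn (fun s : ℝ => s) (Set.Ioi (1:ℝ)) :=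
        h.mono_set (Set.Ioi_subset_Ioi zero_le_one)
      have h2 : IntegrableOn (fun _ : ℝ => (1:ℝ)) (Set.Ioi (1:ℝ)) := by
        refine Integrable.mono' h1 aestronglyMeasurable_const ?_
        refine (ae_restrict_iff' measurableSet_Ioi).mpr (ae_of_all _ fun x hx => ?_)
        rw [norm_one]
        exact le_of_lt hx
      rw [integrableOn_const_iff] at h2
      rcases h2 with h2 | h2
      · simp at h2
      · rw [Real.volume_Ioi] at h2
        exact (lt_irrefl _ h2).elim
    have hcl : cLip V W = 0 := by
      rw [cLip]
      simp only [hI, mul_zero, Real.exp_zero, one_mul]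
      rw [integral_undef hnotint, mul_zero]
    rw [hcl]
    exact mul_nonneg (inv_nonneg.mpr hcVW.le) (Real.exp_pos _).le
  · have ha0 : 0 ≤ c₁ + c₂ ∨ R = 0 := by
      rcases hR.eq_or_lt with h | h
      · exact Or.inr h.symm
      · left
        have hc1 : 0 ≤ c₁ :=
          cc_nonneg hd (fun x => gradient V x) (grad_cont hV) h hdV
        have hc2 : 0 ≤ c₂ :=
          cc_nonneg hd (fun x => gradient (fun x' => W x' 0) x)
            (grad_cont (Wz_smooth hWsmooth 0)) h (fun x y => hdW x y 0)
        linarith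
    have key : ∀ s ∈ Set.Ioi (0:ℝ),
        Real.exp ((1/4) * ∫ u in Set.Ioc (0:ℝ) s, b0 V W u) * s
          ≤ Real.exp ((c₁ + c₂) * R / 4) * (s * Real.exp (-((cV + cW)/8) * s^2)) := by
      intro s hs
      rw [Set.mem_Ioi] at hs
      have hIb := b0_setIntegral_le V W hdV hdW hd hV hWsmooth hcVW hR ha0 hs
      have h1 : (1/4) * ∫ u in Set.Ioc (0:ℝ) s, b0 V W u
          ≤ (1/4) * (-((cV + cW) * s^2/2) + (c₁ + c₂) * R) := by linarith
      calc Real.exp ((1/4) * ∫ u in Set.Ioc (0:ℝ) s, b0 V W u) * s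
          ≤ Real.exp ((1/4) * (-((cV + cW) * s^2/2) + (c₁ + c₂) * R)) * s :=
            mul_le_mul_of_nonneg_right (Real.exp_le_exp.mpr h1) hs.le
        _ = Real.exp ((c₁ + c₂) * R / 4) * (s * Real.exp (-((cV + cW)/8) * s^2)) := by
            rw [show (1/4) * (-((cV + cW) * s^2/2) + (c₁ + c₂) * R)
                = (c₁ + c₂) * R / 4 + (-((cV + cW)/8) * s^2) from by ring, Real.exp_add]
            ring
    have h0 : 0 ≤ᵐ[volume.restrict (Set.Ioi (0:ℝ))]
        (fun s => Real.exp ((1/4) * ∫ u in Set.Ioc (0:ℝ) s, b0 V W u) * s) := by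
      refine (ae_restrict_iff' measurableSet_Ioi).mpr (ae_of_all _ fun s hs => ?_)
      exact mul_nonneg (Real.exp_pos _).le (le_of_lt hs)
    have hMint : Integrable
        (fun s : ℝ => Real.exp ((c₁ + c₂) * R / 4) * (s * Real.exp (-((cV + cW)/8) * s^2)))
        (volume.restrict (Set.Ioi (0:ℝ))) := ((gauss_int hcVW).1).const_mul _
    have hle := integral_mono_of_nonneg h0 hMint
      ((ae_restrict_iff' measurableSet_Ioi).mpr (ae_of_all _ key))
    have hMval : ∫ s in Set.Ioi (0:ℝ),
        Real.exp ((c₁ + c₂) * R / 4) * (s * Real.exp (-((cV + cW)/8) * s^2))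
        = Real.exp ((c₁ + c₂) * R / 4) * (4/(cV + cW)) := by
      rw [integral_const_mul, (gauss_int hcVW).2]
    rw [hMval] at hle
    rw [cLip]
    calc (1/4) * ∫ s in Set.Ioi (0:ℝ),
          Real.exp ((1/4) * ∫ u in Set.Ioc (0:ℝ) s, b0 V W u) * s
        ≤ (1/4) * (Real.exp ((c₁ + c₂) * R / 4) * (4/(cV + cW))) :=
          mul_le_mul_of_nonneg_left hle (by norm_num)
      _ = (cV + cW)⁻¹ * Real.exp ((c₁ + c₂) * R / 4) := by
          field_simp


end
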